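/- arXiv:1402.1505 — 5 statements merged into one kernel-verified Lean document; each statement's English description precedes it below -/
import Mathlib

section
/- Let M(ℓ,n,k) denote the maximal cardinality of a family A ⊆ C([n],k) containing no ℓ pairwise disjoint sets. Then M(ℓ,n,k) ≥ max_{1 ≤ i ≤ k} ∑_{j ≥ i} C(ℓi−1, j)·C(n−ℓi+1, k−j). -/
open scoped Classical

/-- A family has an `ℓ`-matching if it contains `ℓ` pairwise disjoint members. -/
def HasMatching (ℓ : ℕ) (𝒜 : Finset (Finset ℕ)) : Prop :=
  ∃ S : Finset (Finset ℕ), S ⊆ 𝒜 ∧ S.card = ℓ ∧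
    (S : Set (Finset ℕ)).Pairwise fun A B => Disjoint A B

/-- `M ℓ n k` : the maximal cardinality of a family of `k`-subsets of `[n]` with no
`ℓ`-matching. -/
noncomputable def M (ℓ n k : ℕ) : ℕ :=
  ((((Finset.Icc 1 n).powersetCard k).powerset.filter fun 𝒜 => ¬ HasMatching ℓ 𝒜).sup
    Finset.card)

/-!
For each `i`, the `k`-subsets of `[n]` meeting `T = [ℓi - 1]` in at least `i` points form a
family without an `ℓ`-matching, since `ℓ` disjoint members would need `ℓi` points of `T`.
Splitting a member `A` into `A ∩ T` and `A \ T` counts this family as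
`∑_{j ≥ i} C(ℓi - 1, j) C(n - ℓi + 1, k - j)`.
-/

open Finset

section Counting

variable {α : Type*} [DecidableEq α]

theorem union_inter_eq_left_of_disjoint {B C T : Finset α} (hBT : B ⊆ T) (hCT : Disjoint C T) :
    (B ∪ C) ∩ T = B := by
  rw [union_inter_distrib_right, inter_eq_left.mpr hBT, disjoint_iff_inter_eq_empty.mp hCT,
    union_empty]

theorem union_sdiff_eq_right_of_disjoint {B C T : Finset α} (hBT : B ⊆ T) (hCT : Disjoint C T) :
    (B ∪ C) \ T = C := by
  rw [union_sdiff_distrib, sdiff_eq_empty_iff_subset.mpr hBT, sdiff_eq_self_of_disjoint hCT,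
    empty_union]

theorem card_filter_card_inter_eq (U T : Finset α) {j k : ℕ} (hjk : j ≤ k) :
    #{A ∈ U.powersetCard k | #(A ∩ T) = j} =
      (#(U ∩ T)).choose j * (#(U \ T)).choose (k - j) := by
  rw [← card_powersetCard, ← card_powersetCard, ← card_product]
  refine card_bij' (fun A _ => (A ∩ T, A \ T)) (fun p _ => p.1 ∪ p.2) ?_ ?_ ?_ ?_
  · intro A hA
    simp only [mem_filter, mem_powersetCard] at hA
    obtain ⟨⟨hAU, hAk⟩, hAT⟩ := hA
    have hsplit := card_inter_add_card_sdiff A T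
    simp only [mem_product, mem_powersetCard]
    exact ⟨⟨inter_subset_inter_right hAU, hAT⟩, sdiff_subset_sdiff hAU subset_rfl, by omega⟩
  · rintro ⟨B, C⟩ hBC
    simp only [mem_product, mem_powersetCard] at hBC
    obtain ⟨⟨hBUT, hBj⟩, hCUT, hCk⟩ := hBC
    have hCT : Disjoint C T := disjoint_of_subset_left hCUT sdiff_disjoint
    have hBT : B ⊆ T := hBUT.trans inter_subset_right
    simp only [mem_filter, mem_powersetCard, union_inter_eq_left_of_disjoint hBT hCT]
    refine ⟨⟨union_subset (hBUT.trans inter_subset_left) (hCUT.trans sdiff_subset), ?_⟩, hBj⟩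
    rw [card_union_of_disjoint (disjoint_of_subset_left hBT hCT.symm)]
    omega
  · intro A _
    exact sup_inf_sdiff A T
  · rintro ⟨B, C⟩ hBC
    simp only [mem_product, mem_powersetCard] at hBC
    have hCT : Disjoint C T := disjoint_of_subset_left hBC.2.1 sdiff_disjoint
    have hBT : B ⊆ T := hBC.1.1.trans inter_subset_right
    rw [union_inter_eq_left_of_disjoint hBT hCT, union_sdiff_eq_right_of_disjoint hBT hCT]

theorem sum_choose_eq_card_filter_le_card_inter (U T : Finset α) (i k : ℕ) :
    ∑ j ∈ Icc i (min k #(U ∩ T)), (#(U ∩ T)).choose j * (#(U \ T)).choose (k - j) =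
      #{A ∈ U.powersetCard k | i ≤ #(A ∩ T)} := by
  rw [card_eq_sum_card_fiberwise (f := fun A => #(A ∩ T)) (t := Icc i (min k #(U ∩ T)))]
  · refine sum_congr rfl fun j hj => ?_
    obtain ⟨hij, hjk⟩ := mem_Icc.mp hj
    rw [filter_filter, ← card_filter_card_inter_eq U T (hjk.trans (min_le_left _ _))]
    exact congrArg card (filter_congr fun A _ => ⟨fun h => ⟨h ▸ hij, h⟩, And.right⟩)
  · intro A hA
    rw [mem_coe, mem_filter, mem_powersetCard] at hA
    obtain ⟨⟨hAU, hAk⟩, hiA⟩ := hA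
    have hAk' : #(A ∩ T) ≤ k := hAk ▸ card_le_card inter_subset_left
    have hAUT : #(A ∩ T) ≤ #(U ∩ T) := card_le_card (inter_subset_inter_right hAU)
    exact mem_coe.mpr (mem_Icc.mpr ⟨hiA, le_min hAk' hAUT⟩)

end Counting

theorem HasMatching.mul_le_card {ℓ i : ℕ} {𝒜 : Finset (Finset ℕ)} {T : Finset ℕ}
    (hm : HasMatching ℓ 𝒜) (h𝒜 : ∀ A ∈ 𝒜, i ≤ #(A ∩ T)) : ℓ * i ≤ #T := by
  obtain ⟨S, hS𝒜, hSℓ, hS⟩ := hm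
  have hdisj : (S : Set (Finset ℕ)).PairwiseDisjoint (· ∩ T) := fun A hA B hB hAB =>
    (hS hA hB hAB).mono inter_subset_left inter_subset_left
  calc ℓ * i = ∑ _A ∈ S, i := by rw [sum_const, hSℓ, smul_eq_mul]
    _ ≤ ∑ A ∈ S, #(A ∩ T) := sum_le_sum fun A hA => h𝒜 A (hS𝒜 hA)
    _ = #(S.biUnion (· ∩ T)) := (card_biUnion hdisj).symm
    _ ≤ #T := card_le_card (biUnion_subset.mpr fun _ _ => inter_subset_right)

theorem card_le_M {ℓ n k : ℕ} {𝒜 : Finset (Finset ℕ)} (h𝒜 : 𝒜 ⊆ (Icc 1 n).powersetCard k)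
    (hm : ¬HasMatching ℓ 𝒜) : #𝒜 ≤ M ℓ n k :=
  le_sup (f := card) (mem_filter.mpr ⟨mem_powerset.mpr h𝒜, hm⟩)

theorem stmt_2_general (n k ℓ : ℕ) (hℓ : 1 ≤ ℓ) (hn : k * ℓ ≤ n) :
    (Finset.Icc 1 k).sup
        (fun i => ∑ j ∈ Finset.Icc i (min k (ℓ * i - 1)),
          (ℓ * i - 1).choose j * (n - (ℓ * i - 1)).choose (k - j)) ≤ M ℓ n k := by
  refine Finset.sup_le fun i hi => ?_
  obtain ⟨hi1, hik⟩ := mem_Icc.mp hi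
  have hℓi : 1 ≤ ℓ * i := Nat.mul_pos hℓ hi1
  have hℓin : ℓ * i ≤ n := calc
    ℓ * i ≤ ℓ * k := Nat.mul_le_mul_left ℓ hik
    _ ≤ n := by rwa [Nat.mul_comm]
  set T := Icc 1 (ℓ * i - 1)
  have hTU : T ⊆ Icc 1 n := Icc_subset_Icc_right (by omega)
  have hUT : #(Icc 1 n \ T) = n - (ℓ * i - 1) := by
    rw [card_sdiff_of_subset hTU, Nat.card_Icc, Nat.card_Icc]
    omega
  have hT : #(Icc 1 n ∩ T) = ℓ * i - 1 := by
    rw [inter_eq_right.mpr hTU, Nat.card_Icc]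
    omega
  rw [← hUT, ← hT, sum_choose_eq_card_filter_le_card_inter]
  refine card_le_M (filter_subset _ _) fun hm => ?_
  have hcard := hm.mul_le_card fun A hA => (mem_filter.mp hA).2
  rw [Nat.card_Icc] at hcard
  omega

/-- `M(ℓ,n,k) ≥ max_{1 ≤ i ≤ k} ∑_{j ≥ i} C(ℓi−1,j)·C(n−ℓi+1,k−j)`. -/
theorem stmt_2 (n k ℓ : ℕ) (hℓ : 1 ≤ ℓ) (hk : 1 ≤ k) (hn : k * ℓ ≤ n) :
    (Finset.Icc 1 k).sup
        (fun i => ∑ j ∈ Finset.Icc i (min k (ℓ * i - 1)),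
          (ℓ * i - 1).choose j * (n - (ℓ * i - 1)).choose (k - j)) ≤ M ℓ n k :=
  stmt_2_general n k ℓ hℓ hn
end

section
/- For integers a, n, k, i with 1 ≤ i, i ≤ k ≤ n, and a ≥ 1 with a ≤ n, the inequality ∑_{j ≥ i−1} C(a−1, j)·C(n−a+1, k−j) ≥ ∑_{j ≥ i} C(a, j)·C(n−a, k−j) holds. -/
/-!
Put `a = b + 1`, `i = t + 1`, `m = n - a`. Peeling off the smallest index and applying Pascal's
rule to both binomial coefficients shows by induction on `k - t` that the right-hand side exceeds
the left-hand side by exactly `C(b, t) * C(m, k - t)`. Combinatorially: among the `k`-subsets of a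
`b + 1 + m`-set, those with at least `t + 1` elements in the first `b + 1` are contained in those
with at least `t` in the first `b`, and the difference consists of the subsets with exactly `t`
elements in the first `b` that miss the next one.
-/

open Finset

theorem sum_Icc_eq_add_sum_Icc_succ {M : Type*} [AddCommMonoid M] (f : ℕ → M) {t k : ℕ}
    (h : t ≤ k) : ∑ j ∈ Icc t k, f j = f t + ∑ j ∈ Icc (t + 1) k, f j := by
  rw [← insert_Icc_add_one_left_eq_Icc h, sum_insert (by simp)]

theorem sum_Icc_choose_mul_choose_succ (b m t d : ℕ) :
    ∑ j ∈ Icc t (t + d), b.choose j * (m + 1).choose (t + d - j) =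
      ∑ j ∈ Icc (t + 1) (t + d), (b + 1).choose j * m.choose (t + d - j) +
        b.choose t * m.choose d := by
  induction d generalizing t with
  | zero => simp
  | succ d ih =>
    have hk : t + (d + 1) = t + 1 + d := by omega
    rw [hk, sum_Icc_eq_add_sum_Icc_succ (t := t) _ (by omega), ih,
      sum_Icc_eq_add_sum_Icc_succ (t := t + 1) _ (by omega), Nat.add_sub_cancel_left,
      show t + 1 + d - t = d + 1 by omega, Nat.choose_succ_succ, Nat.choose_succ_succ b t]
    ring

theorem sum_Icc_succ_choose_mul_choose_le (b m t k : ℕ) :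
    ∑ j ∈ Icc (t + 1) k, (b + 1).choose j * m.choose (k - j) ≤
      ∑ j ∈ Icc t k, b.choose j * (m + 1).choose (k - j) := by
  rcases le_or_gt t k with htk | hkt
  · obtain ⟨d, rfl⟩ := Nat.exists_eq_add_of_le htk
    rw [sum_Icc_choose_mul_choose_succ]
    exact Nat.le_add_right _ _
  · simp [Icc_eq_empty_of_lt (Nat.lt_succ_of_lt hkt)]

theorem stmt_5_general (a n k i : ℕ) (hi : 1 ≤ i)
    (ha : 1 ≤ a) :
    ∑ j ∈ Finset.Icc i k, a.choose j * (n - a).choose (k - j) ≤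
      ∑ j ∈ Finset.Icc (i - 1) k, (a - 1).choose j * (n - a + 1).choose (k - j) := by
  obtain ⟨b, rfl⟩ := Nat.exists_eq_add_of_le' ha
  obtain ⟨t, rfl⟩ := Nat.exists_eq_add_of_le' hi
  simpa only [Nat.add_sub_cancel] using sum_Icc_succ_choose_mul_choose_le b (n - (b + 1)) t k

/-- `∑_{j ≥ i−1} C(a−1,j)·C(n−a+1,k−j) ≥ ∑_{j ≥ i} C(a,j)·C(n−a,k−j)`. -/
theorem stmt_5 (a n k i : ℕ) (hi : 1 ≤ i) (hik : i ≤ k) (hkn : k ≤ n)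
    (ha : 1 ≤ a) (han : a ≤ n) :
    ∑ j ∈ Finset.Icc i k, a.choose j * (n - a).choose (k - j) ≤
      ∑ j ∈ Finset.Icc (i - 1) k, (a - 1).choose j * (n - a + 1).choose (k - j) :=
  stmt_5_general a n k i hi ha
end

section
/- If a left-compressed family A ⊆ C([n],k) contains ℓ pairwise disjoint sets, then it contains ℓ pairwise disjoint sets all contained in [ℓk]. -/
/-!
Among all `ℓ`-matchings in `𝒜` take one minimising the sum of all elements of all its sets.
If one of its sets contains some `M > ℓk`, then, since the matching covers only `ℓk` points,
some `x ∈ [ℓk]` is uncovered. Replacing `M` by `x` lowers every order statistic of the set, so by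
left compression the new set is still in `𝒜`; the matching stays disjoint and its sum drops.
-/

/-- `𝒜` is left compressed (as a family of `k`-subsets of `[n]`) if whenever
`{a₁<…<a_k} ∈ 𝒜` and `b₁<…<b_k ⊆ [n]` with `b_j ≤ a_j` for all `j`,
then `{b₁,…,b_k} ∈ 𝒜`. -/
def LeftCompressed (n k : ℕ) (𝒜 : Finset (Finset ℕ)) : Prop :=
  ∀ A ∈ 𝒜, ∀ B : Finset ℕ, B ⊆ Finset.Icc 1 n →
    ∀ (hA : A.card = k) (hB : B.card = k),
      (∀ j : Fin k, (B.orderIsoOfFin hB j : ℕ) ≤ (A.orderIsoOfFin hA j : ℕ)) → B ∈ 𝒜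

open Finset

section OrderStatistics

variable {α : Type*} [LinearOrder α]

theorem card_filter_lt_orderEmbOfFin (s : Finset α) {k : ℕ} (h : #s = k) (j : Fin k) :
    #{a ∈ s | a < s.orderEmbOfFin h j} = j := by
  have hs := s.map_orderEmbOfFin_univ h
  generalize s.orderEmbOfFin h = f at hs ⊢
  subst hs
  simp [filter_map, filter_gt_eq_Iio]

theorem card_filter_le_orderEmbOfFin (s : Finset α) {k : ℕ} (h : #s = k) (j : Fin k) :
    #{a ∈ s | a ≤ s.orderEmbOfFin h j} = j + 1 := by
  have hs := s.map_orderEmbOfFin_univ h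
  generalize s.orderEmbOfFin h = f at hs ⊢
  subst hs
  simp [filter_map, filter_ge_eq_Iic]

theorem orderEmbOfFin_le_of_card_filter_le {k : ℕ} {A B : Finset α} (hA : #A = k) (hB : #B = k)
    (h : ∀ t, #{a ∈ A | a ≤ t} ≤ #{b ∈ B | b ≤ t}) (j : Fin k) :
    B.orderEmbOfFin hB j ≤ A.orderEmbOfFin hA j := by
  by_contra! hlt
  have hle := (h (A.orderEmbOfFin hA j)).trans <| card_le_card <|
    B.monotone_filter_right fun b _ hb => hb.trans_lt hlt
  rw [card_filter_le_orderEmbOfFin, card_filter_lt_orderEmbOfFin] at hle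
  omega

theorem card_filter_le_le_insert_erase {A : Finset α} {M x : α} (hM : M ∈ A) (hx : x ∉ A)
    (hxM : x ≤ M) (t : α) :
    #{a ∈ A | a ≤ t} ≤ #{a ∈ insert x (A.erase M) | a ≤ t} := by
  rcases lt_or_ge t M with htM | hMt
  · refine card_le_card fun a ha => ?_
    rw [mem_filter] at ha ⊢
    exact ⟨mem_insert_of_mem (mem_erase.2 ⟨(ha.2.trans_lt htM).ne, ha.1⟩), ha.2⟩
  · have hxA : x ∉ {a ∈ A.erase M | a ≤ t} := fun h =>
      hx (mem_of_mem_erase (mem_of_mem_filter _ h))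
    rw [filter_insert, if_pos (hxM.trans hMt), card_insert_of_notMem hxA, filter_erase,
      card_erase_add_one (mem_filter.2 ⟨hM, hMt⟩)]

end OrderStatistics

theorem exists_mem_notMem_of_card_le_of_mem_of_notMem {α : Type*} {s t : Finset α} {a : α}
    (hst : #s ≤ #t) (has : a ∈ s) (hat : a ∉ t) : ∃ b ∈ t, b ∉ s := by
  classical
  obtain ⟨b, hbt, hbs⟩ :=
    exists_mem_notMem_of_card_lt_card ((card_erase_lt_of_mem has).trans_le hst)
  exact ⟨b, hbt, fun hb => hbs (mem_erase.2 ⟨ne_of_mem_of_not_mem hbt hat, hb⟩)⟩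

section Matchings

variable {α : Type*} [DecidableEq α]

theorem card_biUnion_id_of_pairwise_disjoint {S : Finset (Finset α)} {k : ℕ}
    (hS : (S : Set (Finset α)).Pairwise Disjoint) (hk : ∀ A ∈ S, #A = k) :
    #(S.biUnion id) = #S * k := by
  rw [← sum_const_nat hk]
  exact card_biUnion hS

theorem pairwise_disjoint_insert_erase {S : Finset (Finset α)}
    (hS : (S : Set (Finset α)).Pairwise Disjoint) {A₀ A : Finset α} {x : α} (hA₀ : A₀ ∈ S)
    (hA : A ⊆ insert x A₀) (hx : ∀ C ∈ S, x ∉ C) :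
    ((insert A (S.erase A₀) : Finset (Finset α)) : Set (Finset α)).Pairwise Disjoint := by
  rw [coe_insert, coe_erase]
  refine (hS.mono Set.sdiff_subset).insert_of_symm fun C hC _ => ?_
  exact disjoint_of_subset_left hA
    (disjoint_insert_left.2 ⟨hx C hC.1, hS hA₀ hC.1 fun h => hC.2 h.symm⟩)

end Matchings

def totalSum (S : Finset (Finset ℕ)) : ℕ := ∑ A ∈ S, ∑ a ∈ A, a

theorem sum_insert_erase_lt {A : Finset ℕ} {M x : ℕ} (hM : M ∈ A) (hx : x ∉ A) (hxM : x < M) :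
    ∑ a ∈ insert x (A.erase M), a < ∑ a ∈ A, a := by
  rw [sum_insert fun h => hx (mem_of_mem_erase h), ← add_sum_erase A _ hM]
  omega

theorem totalSum_insert_erase_lt {S : Finset (Finset ℕ)} {A₀ A : Finset ℕ} (hA₀ : A₀ ∈ S)
    (hA : A ∉ S) (hlt : ∑ a ∈ A, a < ∑ a ∈ A₀, a) :
    totalSum (insert A (S.erase A₀)) < totalSum S := by
  rw [totalSum, totalSum, sum_insert fun h => hA (mem_of_mem_erase h), ← add_sum_erase S _ hA₀]
  omega

theorem LeftCompressed.insert_erase_mem {n k : ℕ} {𝒜 : Finset (Finset ℕ)}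
    (hcomp : LeftCompressed n k 𝒜) {A : Finset ℕ} (hA : A ∈ 𝒜) (hAn : A ⊆ Icc 1 n)
    (hAk : #A = k) {M x : ℕ} (hM : M ∈ A) (hx : x ∉ A) (hx₁ : 1 ≤ x) (hxM : x ≤ M) :
    insert x (A.erase M) ∈ 𝒜 := by
  have hA'k : #(insert x (A.erase M)) = k := by
    rw [card_insert_of_notMem fun h => hx (mem_of_mem_erase h), card_erase_add_one hM, hAk]
  have hA'n : insert x (A.erase M) ⊆ Icc 1 n :=
    insert_subset (mem_Icc.2 ⟨hx₁, hxM.trans (mem_Icc.1 (hAn hM)).2⟩)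
      ((erase_subset M A).trans hAn)
  refine hcomp A hA _ hA'n hAk hA'k fun j => ?_
  simp only [coe_orderIsoOfFin_apply]
  exact orderEmbOfFin_le_of_card_filter_le hAk hA'k
    (card_filter_le_le_insert_erase hM hx hxM) j

theorem LeftCompressed.exists_totalSum_lt {n k : ℕ} {𝒜 : Finset (Finset ℕ)}
    (h𝒜 : ∀ A ∈ 𝒜, A ⊆ Icc 1 n ∧ #A = k) (hcomp : LeftCompressed n k 𝒜)
    {S : Finset (Finset ℕ)} (hS𝒜 : S ⊆ 𝒜) (hS : (S : Set (Finset ℕ)).Pairwise Disjoint)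
    (hout : ∃ A₀ ∈ S, ¬ A₀ ⊆ Icc 1 (#S * k)) :
    ∃ S' ⊆ 𝒜, #S' = #S ∧ (S' : Set (Finset ℕ)).Pairwise Disjoint ∧
      totalSum S' < totalSum S := by
  obtain ⟨A₀, hA₀S, hA₀out⟩ := hout
  obtain ⟨M, hM, hMout⟩ := not_subset.1 hA₀out
  obtain ⟨hA₀n, hA₀k⟩ := h𝒜 A₀ (hS𝒜 hA₀S)
  have hMU : M ∈ S.biUnion id := mem_biUnion.2 ⟨A₀, hA₀S, hM⟩
  have hU : #(S.biUnion id) = #S * k :=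
    card_biUnion_id_of_pairwise_disjoint hS fun A hA => (h𝒜 A (hS𝒜 hA)).2
  obtain ⟨x, hx, hxU⟩ := exists_mem_notMem_of_card_le_of_mem_of_notMem
    (by rw [hU, Nat.card_Icc, Nat.add_sub_cancel]) hMU hMout
  have hxS : ∀ C ∈ S, x ∉ C := fun C hC hxC => hxU (mem_biUnion.2 ⟨C, hC, hxC⟩)
  have hxM : x < M := by
    have := mem_Icc.1 (hA₀n hM)
    rw [mem_Icc] at hx hMout
    omega
  set A := insert x (A₀.erase M)
  have hAS : A ∉ S := fun h => hxS A h (mem_insert_self x _)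
  refine ⟨insert A (S.erase A₀), ?_, ?_, ?_, ?_⟩
  · exact insert_subset (hcomp.insert_erase_mem (hS𝒜 hA₀S) hA₀n hA₀k hM (hxS A₀ hA₀S)
      (mem_Icc.1 hx).1 hxM.le) ((erase_subset A₀ S).trans hS𝒜)
  · rw [card_insert_of_notMem fun h => hAS (mem_of_mem_erase h), card_erase_add_one hA₀S]
  · exact pairwise_disjoint_insert_erase hS hA₀S (insert_subset_insert x (erase_subset M A₀)) hxS
  · exact totalSum_insert_erase_lt hA₀S hAS (sum_insert_erase_lt hM (hxS A₀ hA₀S) hxM)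

theorem stmt_7_general (n k ℓ : ℕ) (𝒜 : Finset (Finset ℕ))
    (h𝒜 : ∀ A ∈ 𝒜, A ⊆ Finset.Icc 1 n ∧ A.card = k)
    (hcomp : LeftCompressed n k 𝒜)
    (hmatch : ∃ S : Finset (Finset ℕ), S ⊆ 𝒜 ∧ S.card = ℓ ∧
      (S : Set (Finset ℕ)).Pairwise fun A B => Disjoint A B) :
    ∃ S : Finset (Finset ℕ), S ⊆ 𝒜 ∧ S.card = ℓ ∧
      ((S : Set (Finset ℕ)).Pairwise fun A B => Disjoint A B) ∧
      ∀ A ∈ S, A ⊆ Finset.Icc 1 (ℓ * k) := by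
  classical
  set matchings := {S ∈ 𝒜.powerset | #S = ℓ ∧ (S : Set (Finset ℕ)).Pairwise Disjoint}
  have hne : matchings.Nonempty := by
    obtain ⟨S, hS𝒜, hSℓ, hS⟩ := hmatch
    exact ⟨S, mem_filter.2 ⟨mem_powerset.2 hS𝒜, hSℓ, hS⟩⟩
  obtain ⟨S, hSmem, hmin⟩ := matchings.exists_min_image totalSum hne
  obtain ⟨hS𝒜, rfl, hS⟩ := mem_filter.1 hSmem
  refine ⟨S, mem_powerset.1 hS𝒜, rfl, hS, ?_⟩
  by_contra! hout
  obtain ⟨S', hS'𝒜, hS'card, hS', hlt⟩ :=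
    hcomp.exists_totalSum_lt h𝒜 (mem_powerset.1 hS𝒜) hS hout
  exact (hmin S' (mem_filter.2 ⟨mem_powerset.2 hS'𝒜, hS'card, hS'⟩)).not_gt hlt

/-- If a left-compressed family of `k`-subsets of `[n]` contains `ℓ` pairwise disjoint
sets, then it contains `ℓ` pairwise disjoint sets all inside `[ℓk]`. -/
theorem stmt_7 (n k ℓ : ℕ) (hn : ℓ * k ≤ n) (𝒜 : Finset (Finset ℕ))
    (h𝒜 : ∀ A ∈ 𝒜, A ⊆ Finset.Icc 1 n ∧ A.card = k)
    (hcomp : LeftCompressed n k 𝒜)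
    (hmatch : ∃ S : Finset (Finset ℕ), S ⊆ 𝒜 ∧ S.card = ℓ ∧
      (S : Set (Finset ℕ)).Pairwise fun A B => Disjoint A B) :
    ∃ S : Finset (Finset ℕ), S ⊆ 𝒜 ∧ S.card = ℓ ∧
      ((S : Set (Finset ℕ)).Pairwise fun A B => Disjoint A B) ∧
      ∀ A ∈ S, A ⊆ Finset.Icc 1 (ℓ * k) :=
  stmt_7_general n k ℓ 𝒜 h𝒜 hcomp hmatch
end

section
/- For integers ℓ ≥ 2, k ≥ 1, 1 ≤ i ≤ k, and n ≥ kℓ with ℓ(i−1) ≤ a < ℓi−1: the sum ∑_{j > a/ℓ} C(a, j)·C(n−a, k−j) is non-increasing as a decreases within the interval [ℓ(i−1), ℓi−1], i.e., ∑_{j > a/ℓ} C(a,j)C(n−a,k−j) ≤ ∑_{j > (a+1)/ℓ} C(a+1,j)C(n−a−1,k−j) whenever ℓ(i−1) ≤ a < a+1 ≤ ℓi−1. -/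
/-!
For `ℓ(i−1) ≤ a < a+1 < ℓi` both sums run over `i ≤ j ≤ k`. Writing `n − a = b + 1`, Pascal's
rule applied to `C(a+1, j)` and to `C(b+1, k−j)` makes the difference of the two sums telescope:
the right-hand sum exceeds the left-hand one by exactly `C(a, i−1)·C(b, k−i)`.
-/

open Finset

theorem sum_Icc_choose_succ_mul_choose_eq (a b : ℕ) {i k : ℕ} (hik : i < k) :
    ∑ j ∈ Icc (i + 1) k, (a + 1).choose j * b.choose (k - j) =
      ∑ j ∈ Icc (i + 1) k, a.choose j * (b + 1).choose (k - j) +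
        a.choose i * b.choose (k - (i + 1)) := by
  obtain ⟨d, hd⟩ : ∃ d, k = i + 1 + d := ⟨k - (i + 1), by omega⟩
  induction d generalizing i with
  | zero =>
    subst hd
    simp [Nat.choose_succ_succ', add_comm]
  | succ d ih =>
    rw [← insert_Icc_add_one_left_eq_Icc hik, sum_insert (by simp), sum_insert (by simp),
      ih (by omega) (by omega), show k - (i + 1) = k - (i + 1 + 1) + 1 by omega,
      Nat.choose_succ_succ', Nat.choose_succ_succ' b]
    ring

theorem sum_Icc_choose_mul_choose_succ_le (a b i k : ℕ) :
    ∑ j ∈ Icc (i + 1) k, a.choose j * (b + 1).choose (k - j) ≤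
      ∑ j ∈ Icc (i + 1) k, (a + 1).choose j * b.choose (k - j) := by
  rcases lt_or_ge i k with hik | hki
  · rw [sum_Icc_choose_succ_mul_choose_eq a b hik]
    exact Nat.le_add_right _ _
  · simp [Icc_eq_empty_of_lt (Nat.lt_succ_of_le hki)]

theorem stmt_9_general (n k ℓ i a : ℕ) (hik : i ≤ k)
    (hn : k * ℓ ≤ n) (ha : ℓ * (i - 1) ≤ a) (ha' : a + 1 ≤ ℓ * i - 1) :
    ∑ j ∈ Finset.Icc (a / ℓ + 1) k, a.choose j * (n - a).choose (k - j) ≤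
      ∑ j ∈ Finset.Icc ((a + 1) / ℓ + 1) k,
        (a + 1).choose j * (n - a - 1).choose (k - j) := by
  obtain ⟨m, rfl⟩ : ∃ m, i = m + 1 := ⟨i - 1, by cases i <;> simp_all⟩
  rw [Nat.add_sub_cancel] at ha
  rw [mul_add, mul_one] at ha'
  have hdiv : ∀ c, ℓ * m ≤ c → c < ℓ * m + ℓ → c / ℓ = m := fun c h₁ h₂ =>
    Nat.div_eq_of_lt_le (by rwa [mul_comm]) (by rwa [Nat.succ_mul, mul_comm])
  have han : a < n := by
    have : ℓ * m + ℓ ≤ k * ℓ := by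
      simpa [mul_add, mul_comm] using Nat.mul_le_mul_right ℓ hik
    omega
  rw [hdiv a ha (by omega), hdiv (a + 1) (by omega) (by omega),
    show n - a = n - a - 1 + 1 by omega]
  exact sum_Icc_choose_mul_choose_succ_le a (n - a - 1) m k

/-- Monotonicity of `∑_{j > a/ℓ} C(a,j)C(n−a,k−j)` in `a` within `[ℓ(i−1), ℓi−1]`. -/
theorem stmt_9 (n k ℓ i a : ℕ) (hℓ : 2 ≤ ℓ) (hk : 1 ≤ k) (hi : 1 ≤ i) (hik : i ≤ k)
    (hn : k * ℓ ≤ n) (ha : ℓ * (i - 1) ≤ a) (ha' : a + 1 ≤ ℓ * i - 1) :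
    ∑ j ∈ Finset.Icc (a / ℓ + 1) k, a.choose j * (n - a).choose (k - j) ≤
      ∑ j ∈ Finset.Icc ((a + 1) / ℓ + 1) k,
        (a + 1).choose j * (n - a - 1).choose (k - j) :=
  stmt_9_general n k ℓ i a hik hn ha ha'
end

section
/- For ℓ ≥ 2, k ≥ 1, n ≥ kℓ: max_{1 ≤ a ≤ kℓ−1} ∑_{j > a/ℓ} C(a,j)·C(n−a,k−j) = max_{1 ≤ i ≤ k} ∑_{j ≥ i} C(ℓi−1,j)·C(n−ℓi+1,k−j). -/
/-!
The tail `∑_{j ≥ i} C(a,j) C(n-a,k-j)` counts the `k`-subsets of an `n`-set meeting a fixed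
`a`-subset in at least `i` points, so for `i ≥ 1` it increases with `a`; algebraically this is
Pascal's rule applied to either factor. The term of `a` on the left, with `i = ⌊a/ℓ⌋ + 1`, is
therefore at most the term of `ℓi - 1`, which is the term of `i` on the right, and every term
on the right arises this way.
-/

open Finset

def vandermondeTail (i k a b : ℕ) : ℕ := ∑ j ∈ Icc i k, a.choose j * b.choose (k - j)

namespace vandermondeTail

lemma succ_right (i k a b : ℕ) :
    vandermondeTail i (k + 1) a (b + 1) =
      vandermondeTail i (k + 1) a b + vandermondeTail i k a b := by
  rcases lt_or_ge (k + 1) i with hik | hik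
  · simp [vandermondeTail, Icc_eq_empty_of_lt hik, Icc_eq_empty_of_lt (k.lt_succ_self.trans hik)]
  have pascal : ∀ j ∈ Icc i k, a.choose j * (b + 1).choose (k + 1 - j) =
      a.choose j * b.choose (k + 1 - j) + a.choose j * b.choose (k - j) := by
    intro j hj
    rw [Nat.sub_add_comm (mem_Icc.mp hj).2, Nat.choose_succ_succ', mul_add, add_comm]
  simp only [vandermondeTail, sum_Icc_succ_top hik, sum_congr rfl pascal, sum_add_distrib,
    Nat.sub_self, Nat.choose_zero_right]
  ring

lemma succ_left (i k a b : ℕ) :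
    vandermondeTail (i + 1) (k + 1) (a + 1) b =
      vandermondeTail (i + 1) (k + 1) a b + vandermondeTail i k a b := by
  rw [vandermondeTail, vandermondeTail, vandermondeTail, ← map_add_right_Icc, sum_map, sum_map,
    ← sum_add_distrib]
  refine sum_congr rfl fun j _ => ?_
  simp only [addRightEmbedding_apply, Nat.choose_succ_succ', Nat.add_sub_add_right]
  ring

lemma start_succ_le (i k a b : ℕ) : vandermondeTail (i + 1) k a b ≤ vandermondeTail i k a b :=
  sum_le_sum_of_subset (Icc_subset_Icc_left i.le_succ)

lemma succ_right_le_succ_left (i k a b : ℕ) :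
    vandermondeTail (i + 1) k a (b + 1) ≤ vandermondeTail (i + 1) k (a + 1) b := by
  cases k with
  | zero => simp [vandermondeTail]
  | succ k =>
    rw [succ_right, succ_left]
    exact Nat.add_le_add_left (start_succ_le i k a b) _

lemma add_right_le_add_left (i k a b d : ℕ) :
    vandermondeTail (i + 1) k a (b + d) ≤ vandermondeTail (i + 1) k (a + d) b := by
  induction d generalizing a with
  | zero => rfl
  | succ d ih =>
    calc vandermondeTail (i + 1) k a (b + (d + 1))
        ≤ vandermondeTail (i + 1) k (a + 1) (b + d) := succ_right_le_succ_left i k a (b + d)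
      _ ≤ vandermondeTail (i + 1) k (a + (d + 1)) b := by
        rw [← add_assoc, add_right_comm]; exact ih (a + 1)

lemma sub_mono (i k n : ℕ) {a a' : ℕ} (h : a ≤ a') (h' : a' ≤ n) :
    vandermondeTail (i + 1) k a (n - a) ≤ vandermondeTail (i + 1) k a' (n - a') := by
  obtain ⟨d, rfl⟩ := Nat.exists_eq_add_of_le h
  obtain ⟨b, rfl⟩ := Nat.exists_eq_add_of_le h'
  rw [show a + d + b - a = b + d by omega, Nat.add_sub_cancel_left]
  exact add_right_le_add_left i k a b d

end vandermondeTail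

lemma Nat.mul_sub_one_div_add_one {ℓ i : ℕ} (hℓ : 0 < ℓ) (hi : 0 < i) :
    (ℓ * i - 1) / ℓ + 1 = i := by
  obtain ⟨i, rfl⟩ := Nat.exists_eq_add_of_lt hi
  have : ℓ * (0 + i + 1) - 1 = ℓ * i + (ℓ - 1) := by rw [zero_add, mul_add_one]; omega
  rw [this, Nat.mul_add_div hℓ, Nat.div_eq_of_lt (by omega)]
  simp

theorem stmt_10_general (n k ℓ : ℕ) (hℓ : 2 ≤ ℓ) (hn : k * ℓ ≤ n) :
    (Finset.Icc 1 (k * ℓ - 1)).sup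
        (fun a => ∑ j ∈ Finset.Icc (a / ℓ + 1) k, a.choose j * (n - a).choose (k - j)) =
      (Finset.Icc 1 k).sup
        (fun i => ∑ j ∈ Finset.Icc i k,
          (ℓ * i - 1).choose j * (n - (ℓ * i - 1)).choose (k - j)) := by
  have hℓ0 : 0 < ℓ := by omega
  change (Icc 1 (k * ℓ - 1)).sup (fun a => vandermondeTail (a / ℓ + 1) k a (n - a)) =
    (Icc 1 k).sup (fun i => vandermondeTail i k (ℓ * i - 1) (n - (ℓ * i - 1)))
  refine le_antisymm (Finset.sup_le fun a ha => ?_) (Finset.sup_le fun i hi => ?_)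
  · rw [mem_Icc] at ha
    have hi : a / ℓ + 1 ∈ Icc 1 k :=
      mem_Icc.mpr ⟨le_add_self, (Nat.div_lt_iff_lt_mul hℓ0).mpr (by omega)⟩
    have hℓi : ℓ * (a / ℓ + 1) ≤ k * ℓ := mul_comm k ℓ ▸ Nat.mul_le_mul_left ℓ (mem_Icc.mp hi).2
    have ha' : a ≤ ℓ * (a / ℓ + 1) - 1 := Nat.le_sub_one_of_lt (Nat.lt_mul_div_succ a hℓ0)
    exact (vandermondeTail.sub_mono _ k n ha' (by omega)).trans
      (le_sup (f := fun i => vandermondeTail i k (ℓ * i - 1) (n - (ℓ * i - 1))) hi)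
  · rw [mem_Icc] at hi
    have hℓi : ℓ ≤ ℓ * i ∧ ℓ * i ≤ k * ℓ :=
      ⟨Nat.le_mul_of_pos_right ℓ hi.1, mul_comm k ℓ ▸ Nat.mul_le_mul_left ℓ hi.2⟩
    have ha : ℓ * i - 1 ∈ Icc 1 (k * ℓ - 1) := mem_Icc.mpr ⟨by omega, by omega⟩
    calc vandermondeTail i k (ℓ * i - 1) (n - (ℓ * i - 1))
        = vandermondeTail ((ℓ * i - 1) / ℓ + 1) k (ℓ * i - 1) (n - (ℓ * i - 1)) := by
          rw [Nat.mul_sub_one_div_add_one hℓ0 hi.1]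
      _ ≤ _ := le_sup (f := fun a => vandermondeTail (a / ℓ + 1) k a (n - a)) ha

/-- `max_{1 ≤ a ≤ kℓ−1} ∑_{j > a/ℓ} C(a,j)C(n−a,k−j)
  = max_{1 ≤ i ≤ k} ∑_{j ≥ i} C(ℓi−1,j)C(n−ℓi+1,k−j)`. -/
theorem stmt_10 (n k ℓ : ℕ) (hℓ : 2 ≤ ℓ) (hk : 1 ≤ k) (hn : k * ℓ ≤ n) :
    (Finset.Icc 1 (k * ℓ - 1)).sup
        (fun a => ∑ j ∈ Finset.Icc (a / ℓ + 1) k, a.choose j * (n - a).choose (k - j)) =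
      (Finset.Icc 1 k).sup
        (fun i => ∑ j ∈ Finset.Icc i k,
          (ℓ * i - 1).choose j * (n - (ℓ * i - 1)).choose (k - j)) :=
  stmt_10_general n k ℓ hℓ hn
end
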